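/- arXiv:0711.4004 — 2 statements merged into one kernel-verified Lean document; each statement's English description precedes it below -/
import Mathlib

section
/- (Lemma D.) Assume Σ_{r=0}^{2} ∫ |f_{ε+Z}^{(r)}(v)|² dv < ∞ and E[|Y_1|^κ] < ∞ for some κ > 0. Then for r = 0, 1, 2 and all y ∈ ℝ, F_Y^{(r)}(y) = E[F_{ε+Z}^{(r)}(y − X_{1,0})], where X_{1,0} = X_1 − Z_1 = Σ_{k=1}^∞ c_k Z_{1−k}. -/
open MeasureTheory ProbabilityTheory Filter Asymptotics
open scoped Real Topology NNReal ProbabilityTheory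

noncomputable section

/-!
Write `X₁ = Z₁ + W` with `W = ∑_{k ≥ 1} c_k Z_{1-k}`. Then `W` is a function of `(Z_i)_{i ≤ 0}`,
hence independent of `S = ε₁ + Z₁`, and `F_Y(t) = E F_S(t - W)`. The density of `S` is
`p = max f_{ε+Z} 0` (`f_{ε+Z}` enters the law only through `ENNReal.ofReal`); it is Lipschitz
and integrable, hence bounded, so `F_S` and `p` are Lipschitz and we may differentiate twice under
the expectation. For the second derivative `p` must be differentiable at `y - W` almost surely:
`p` has kinks only at the countably many transversal zeros of `f_{ε+Z}`, and the law of `W` has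
no atoms as soon as some `c_k ≠ 0` with `k ≥ 1`, since `W` is then `c_k Z_{1-k}` (which has a
density) plus an independent variable. If all those `c_k` vanish, `W = 0` and there is nothing to
prove.
-/

open Set

lemma countable_setOf_eq_zero_and_deriv_ne_zero {g : ℝ → ℝ} (hg : Differentiable ℝ g) :
    {x | g x = 0 ∧ deriv g x ≠ 0}.Countable := by
  have : DiscreteTopology {x | g x = 0 ∧ deriv g x ≠ 0} := by
    rw [discreteTopology_subtype_iff]
    intro x hx
    rw [inf_principal_eq_bot]
    filter_upwards [(hg x).hasDerivAt.eventually_ne hx.2] with z hz hzs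
    exact hz (hzs.1.trans hx.1.symm)
  rw [← Set.countable_coe_iff, ← TopologicalSpace.separableSpace_iff_countable]
  infer_instance

lemma DifferentiableAt.max_zero {g : ℝ → ℝ} {x : ℝ} (hg : DifferentiableAt ℝ g x)
    (hx : g x = 0 → deriv g x = 0) : DifferentiableAt ℝ (fun y => max (g y) 0) x := by
  rcases lt_trichotomy (g x) 0 with hneg | hzero | hpos
  · refine (differentiableAt_const (0 : ℝ)).congr_of_eventuallyEq ?_
    filter_upwards [hg.continuousAt.eventually_lt continuousAt_const hneg] with y hy
    exact max_eq_right hy.le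
  · -- `max (g ·) 0` moves no faster than `g`, which is flat at `x`
    have hflat : (fun y => g y - g x) =o[𝓝 x] fun y => y - x := by
      simpa [hx hzero] using hasDerivAt_iff_isLittleO.mp hg.hasDerivAt
    have hmax : (fun y => max (g y) 0 - max (g x) 0) =O[𝓝 x] fun y => g y - g x :=
      IsBigO.of_bound 1 (Eventually.of_forall fun y => by
        simpa [Real.norm_eq_abs] using abs_max_sub_max_le_abs (g y) (g x) 0)
    refine (hasDerivAt_iff_isLittleO.mpr ?_).differentiableAt (f' := 0)
    simpa using hmax.trans_isLittleO hflat
  · refine hg.congr_of_eventuallyEq ?_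
    filter_upwards [continuousAt_const.eventually_lt hg.continuousAt hpos] with y hy
    exact max_eq_left hy.le

lemma LipschitzWith.le_add_integral {p : ℝ → ℝ} {K : ℝ≥0} (hp : LipschitzWith K p)
    (hp0 : ∀ x, 0 ≤ p x) (hint : Integrable p) (x : ℝ) : p x ≤ K + ∫ t, p t := by
  have hlow : ∀ t ∈ Ioc x (x + 1), p x - K ≤ p t := by
    intro t ht
    have h := hp.dist_le_mul t x
    rw [Real.dist_eq, Real.dist_eq, abs_of_pos (sub_pos.mpr ht.1)] at h
    nlinarith [neg_abs_le (p t - p x), ht.2, K.coe_nonneg]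
  calc p x = (∫ _ in Ioc x (x + 1), (p x - K)) + K := by simp
    _ ≤ (∫ t in Ioc x (x + 1), p t) + K :=
      add_le_add_left (setIntegral_mono_on (by simp) hint.integrableOn measurableSet_Ioc hlow) _
    _ ≤ K + ∫ t, p t := by
      linarith [setIntegral_le_integral (s := Ioc x (x + 1)) hint (ae_of_all _ hp0)]

lemma hasDerivAt_integral_comp_sub {Ω : Type*} {mΩ : MeasurableSpace Ω} {P : Measure Ω}
    [IsFiniteMeasure P] {W : Ω → ℝ} (hW : Measurable W) {g : ℝ → ℝ} {K : ℝ≥0}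
    (hg : LipschitzWith K g) {y : ℝ} (hint : Integrable (fun ω => g (y - W ω)) P)
    (hdiff : ∀ᵐ ω ∂P, DifferentiableAt ℝ g (y - W ω)) :
    HasDerivAt (fun t => ∫ ω, g (t - W ω) ∂P) (∫ ω, deriv g (y - W ω) ∂P) y := by
  have hshift : ∀ w, LipschitzWith K fun t => g (t - w) := fun w => by
    have hsub : LipschitzWith 1 fun t : ℝ => t - w := (IsometryEquiv.subRight w).isometry.lipschitz
    simpa [Function.comp_def] using hg.comp hsub
  refine (hasDerivAt_integral_of_dominated_loc_of_lip (bound := fun _ => (K : ℝ))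
    univ_mem (Eventually.of_forall fun t => ?_) hint ?_
    (ae_of_all _ fun ω => ?_) (integrable_const _) ?_).2
  · exact (hg.continuous.measurable.comp (measurable_const.sub hW)).aestronglyMeasurable
  · exact ((measurable_deriv g).comp (measurable_const.sub hW)).aestronglyMeasurable
  · simpa using (hshift (W ω)).lipschitzOnWith (s := univ)
  · filter_upwards [hdiff] with ω hω
    exact hω.hasDerivAt.comp_sub_const y (W ω)

lemma lipschitzWith_of_abs_deriv_le {g : ℝ → ℝ} (hg : Differentiable ℝ g) {C : ℝ}
    (h : ∀ x, |deriv g x| ≤ C) : LipschitzWith C.toNNReal g :=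
  lipschitzWith_of_nnnorm_deriv_le hg fun x => by
    rw [← NNReal.coe_le_coe, coe_nnnorm]
    exact (h x).trans (Real.le_coe_toNNReal C)

lemma integrable_max_zero_of_withDensity {μ : Measure ℝ} [IsFiniteMeasure μ] {f : ℝ → ℝ}
    (hμ : μ = volume.withDensity fun x => ENNReal.ofReal (f x)) (hf : Continuous f) :
    Integrable fun x => max (f x) 0 := by
  refine ⟨(hf.max continuous_const).aestronglyMeasurable, ?_⟩
  rw [hasFiniteIntegral_iff_ofReal (ae_of_all _ fun t => le_max_right (f t) 0)]
  have hfin := measure_lt_top μ univ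
  rw [hμ, withDensity_apply _ MeasurableSet.univ, Measure.restrict_univ] at hfin
  simpa using hfin

lemma measure_Iic_toReal_eq_integral {μ : Measure ℝ} {f : ℝ → ℝ}
    (hμ : μ = volume.withDensity fun x => ENNReal.ofReal (f x)) (hf : Continuous f) (x : ℝ) :
    (μ (Iic x)).toReal = ∫ t in Iic x, max (f t) 0 := by
  rw [integral_eq_lintegral_of_nonneg_ae (ae_of_all _ fun t => le_max_right (f t) 0)
    (hf.max continuous_const).aestronglyMeasurable.restrict, hμ,
    withDensity_apply _ measurableSet_Iic]
  simp

lemma hasDerivAt_measure_Iic_toReal {μ : Measure ℝ} [IsFiniteMeasure μ] {f : ℝ → ℝ}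
    (hμ : μ = volume.withDensity fun x => ENNReal.ofReal (f x)) (hf : Continuous f) (x : ℝ) :
    HasDerivAt (fun x => (μ (Iic x)).toReal) (max (f x) 0) x := by
  have hint := integrable_max_zero_of_withDensity hμ hf
  have hcdf : ∀ u, (μ (Iic u)).toReal = (μ (Iic 0)).toReal + ∫ t in (0 : ℝ)..u, max (f t) 0 := by
    intro u
    rw [measure_Iic_toReal_eq_integral hμ hf, measure_Iic_toReal_eq_integral hμ hf,
      ← intervalIntegral.integral_Iic_sub_Iic hint.integrableOn hint.integrableOn]
    ring
  rw [funext hcdf]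
  exact ((hf.max continuous_const).integral_hasStrictDerivAt 0 x).hasDerivAt.const_add _

theorem iteratedDeriv_integral_comp_sub_cdf {Ω : Type*} {mΩ : MeasurableSpace Ω}
    {P : Measure Ω} [IsFiniteMeasure P] {W : Ω → ℝ} (hW : Measurable W)
    [NullSingletonClass (P.map W)] {μ : Measure ℝ} [IsFiniteMeasure μ] {f : ℝ → ℝ}
    (hμ : μ = volume.withDensity fun x => ENNReal.ofReal (f x)) (hf : Differentiable ℝ f)
    {M : ℝ} (hM : ∀ x, |deriv f x| ≤ M) {F : ℝ → ℝ} (hF : ∀ x, F x = (μ (Iic x)).toReal)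
    {r : ℕ} (hr : r ≤ 2) (y : ℝ) :
    iteratedDeriv r (fun t => ∫ ω, F (t - W ω) ∂P) y = ∫ ω, iteratedDeriv r F (y - W ω) ∂P := by
  set p : ℝ → ℝ := fun x => max (f x) 0
  have hFp : ∀ x, HasDerivAt F (p x) x := by
    simpa only [← funext hF] using hasDerivAt_measure_Iic_toReal hμ hf.continuous
  have hderivF : deriv F = p := funext fun x => (hFp x).deriv
  have hp_lip : LipschitzWith M.toNNReal p := (lipschitzWith_of_abs_deriv_le hf hM).max_const 0
  have hp_int : Integrable p := integrable_max_zero_of_withDensity hμ hf.continuous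
  have hp_bdd : ∀ x, |p x| ≤ M.toNNReal + ∫ t, p t := fun x => by
    rw [abs_of_nonneg (le_max_right _ _)]
    exact hp_lip.le_add_integral (fun t => le_max_right _ _) hp_int x
  have hF_lip := lipschitzWith_of_abs_deriv_le (fun x => (hFp x).differentiableAt)
    (hderivF ▸ hp_bdd)
  have hF_bdd : ∀ x, |F x| ≤ (μ univ).toReal := fun x => by
    rw [hF, abs_of_nonneg ENNReal.toReal_nonneg]
    exact ENNReal.toReal_mono (measure_ne_top μ univ) (measure_mono (subset_univ _))
  have hint : ∀ {g : ℝ → ℝ} (C : ℝ), Continuous g → (∀ x, |g x| ≤ C) → ∀ t,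
      Integrable (fun ω => g (t - W ω)) P := fun C hg hC t =>
    .of_bound ((hg.measurable.comp (measurable_const.sub hW)).aestronglyMeasurable) C
      (ae_of_all _ fun ω => hC (t - W ω))
  have hD1 : ∀ t, HasDerivAt (fun t => ∫ ω, F (t - W ω) ∂P) (∫ ω, p (t - W ω) ∂P) t := fun t => by
    simpa only [hderivF] using hasDerivAt_integral_comp_sub hW hF_lip
      (hint _ hF_lip.continuous hF_bdd t) (ae_of_all _ fun ω => (hFp _).differentiableAt)
  have hD2 : HasDerivAt (fun t => ∫ ω, p (t - W ω) ∂P) (∫ ω, deriv p (y - W ω) ∂P) y := by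
    refine hasDerivAt_integral_comp_sub hW hp_lip (hint _ hp_lip.continuous hp_bdd y) ?_
    have hkinks :=
      ((countable_setOf_eq_zero_and_deriv_ne_zero hf).image (y - ·)).ae_notMem (P.map W)
    filter_upwards [ae_of_ae_map hW.aemeasurable hkinks] with ω hω
    refine (hf _).max_zero fun h0 => ?_
    by_contra hd
    exact hω ⟨y - W ω, ⟨h0, hd⟩, sub_sub_cancel y (W ω)⟩
  interval_cases r
  · simp
  · simpa [hderivF] using (hD1 y).deriv
  · rw [iteratedDeriv_succ, iteratedDeriv_one, funext fun t => (hD1 t).deriv, hD2.deriv]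
    simp [iteratedDeriv_succ, hderivF]

lemma indep_sup_right_of_indep_sup_left {Ω : Type*} {mΩ : MeasurableSpace Ω} {μ : Measure Ω}
    [IsZeroOrProbabilityMeasure μ] {m₁ m₂ m₃ : MeasurableSpace Ω}
    (h₁ : m₁ ≤ mΩ) (h₂ : m₂ ≤ mΩ) (h₃ : m₃ ≤ mΩ)
    (h₁₂ : Indep m₁ m₂ μ) (h₁₂₃ : Indep (m₁ ⊔ m₂) m₃ μ) : Indep m₁ (m₂ ⊔ m₃) μ := by
  -- test independence against the π-system of intersections `B ∩ C`, which generates `m₂ ⊔ m₃`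
  set rects : Set (Set Ω) := {s | ∃ B C, MeasurableSet[m₂] B ∧ MeasurableSet[m₃] C ∧ s = B ∩ C}
  have hrects : IsPiSystem rects := by
    rintro _ ⟨B, C, hB, hC, rfl⟩ _ ⟨B', C', hB', hC', rfl⟩ _
    exact ⟨B ∩ B', C ∩ C', hB.inter hB', hC.inter hC', by ext; simp; tauto⟩
  have hgen : m₂ ⊔ m₃ = MeasurableSpace.generateFrom rects := by
    refine le_antisymm (sup_le (fun B hB => ?_) (fun C hC => ?_)) ?_
    · exact MeasurableSpace.measurableSet_generateFrom ⟨B, univ, hB, .univ, (inter_univ B).symm⟩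
    · exact MeasurableSpace.measurableSet_generateFrom ⟨univ, C, .univ, hC, (univ_inter C).symm⟩
    · refine MeasurableSpace.generateFrom_le ?_
      rintro _ ⟨B, C, hB, hC, rfl⟩
      exact (le_sup_left (b := m₃) B hB).inter (le_sup_right (a := m₂) C hC)
  refine IndepSets.indep h₁ (sup_le h₂ h₃) (@MeasurableSpace.isPiSystem_measurableSet Ω m₁) hrects
    (@MeasurableSpace.generateFrom_measurableSet Ω m₁).symm hgen ?_
  rw [IndepSets_iff]
  rintro A _ hA ⟨B, C, hB, hC, rfl⟩
  have hA' : MeasurableSet[m₁ ⊔ m₂] A := le_sup_left (b := m₂) A hA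
  have hB' : MeasurableSet[m₁ ⊔ m₂] B := le_sup_right (a := m₁) B hB
  rw [← inter_assoc, (Indep_iff _ _ _).mp h₁₂₃ _ _ (hA'.inter hB') hC,
    (Indep_iff _ _ _).mp h₁₂ _ _ hA hB, (Indep_iff _ _ _).mp h₁₂₃ _ _ hB' hC, mul_assoc]

lemma nullSingletonClass_map_of_injective {α β : Type*} [MeasurableSpace α] [MeasurableSpace β]
    [MeasurableSingletonClass β] {ν : Measure α} [NullSingletonClass ν] {g : α → β}
    (hg : Measurable g) (hinj : Function.Injective g) : NullSingletonClass (ν.map g) where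
  measure_singleton x := by
    rw [Measure.map_apply hg (measurableSet_singleton x)]
    exact (subsingleton_singleton.preimage hinj).measure_zero ν

instance Measure.nullSingletonClass_conv {G : Type*} [AddGroup G] [MeasurableSpace G]
    [MeasurableAdd₂ G] [MeasurableSingletonClass G] (μ ν : Measure G) [SFinite ν]
    [NullSingletonClass ν] : NullSingletonClass (μ ∗ ν) where
  measure_singleton x := by
    have hs := measurable_add (measurableSet_singleton x)
    have hslice : ∀ a : G, Prod.mk a ⁻¹' ((fun q : G × G => q.1 + q.2) ⁻¹' {x}) = {-a + x} :=
      fun a => by ext b; simp [eq_neg_add_iff_add_eq]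
    simp [Measure.conv, Measure.map_apply measurable_add (measurableSet_singleton x),
      Measure.prod_apply hs, hslice]

lemma IndepFun.nullSingletonClass_map_add_mul {Ω : Type*} {mΩ : MeasurableSpace Ω}
    {μ : Measure Ω} [IsFiniteMeasure μ] {U V : Ω → ℝ} (hUV : IndepFun U V μ)
    (hU : Measurable U) (hV : Measurable V) [NullSingletonClass (μ.map V)] {a : ℝ} (ha : a ≠ 0) :
    NullSingletonClass (μ.map fun ω => U ω + a * V ω) := by
  have hmul : Measurable fun v : ℝ => a * v := measurable_const_mul a
  have := nullSingletonClass_map_of_injective (ν := μ.map V) hmul (mul_right_injective₀ ha)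
  rw [Measure.map_map hmul hV] at this
  exact (hUV.comp measurable_id hmul).map_add_eq_map_conv_map hU (hmul.comp hV) ▸
    Measure.nullSingletonClass_conv _ _

lemma IndepFun.measure_add_le_toReal_eq_integral {Ω : Type*} {mΩ : MeasurableSpace Ω}
    {μ : Measure Ω} [IsFiniteMeasure μ] {W S : Ω → ℝ} (hWS : IndepFun W S μ)
    (hW : Measurable W) (hS : Measurable S) (t : ℝ) :
    (μ {ω | W ω + S ω ≤ t}).toReal = ∫ ω, ((μ.map S) (Iic (t - W ω))).toReal ∂μ := by
  have hs : MeasurableSet {q : ℝ × ℝ | q.1 + q.2 ≤ t} := measurable_add measurableSet_Iic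
  have hslice : ∀ w : ℝ, Prod.mk w ⁻¹' {q : ℝ × ℝ | q.1 + q.2 ≤ t} = Iic (t - w) :=
    fun w => by ext s; simp [le_sub_iff_add_le']
  have hmono : Monotone fun u => (μ.map S) (Iic u) :=
    fun a b hab => measure_mono (Iic_subset_Iic.mpr hab)
  have hmeas : Measurable fun w => (μ.map S) (Iic (t - w)) :=
    hmono.measurable.comp (measurable_const.sub measurable_id)
  rw [← integral_map hW.aemeasurable hmeas.ennreal_toReal.aestronglyMeasurable,
    integral_toReal hmeas.aemeasurable (ae_of_all _ fun w => measure_lt_top _ _)]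
  congr 1
  have hsum : {ω | W ω + S ω ≤ t} = (W + S) ⁻¹' Iic t := rfl
  rw [hsum, ← Measure.map_apply (hW.add hS) measurableSet_Iic,
    hWS.map_add_eq_map_conv_map hW hS, Measure.conv,
    Measure.map_apply measurable_add measurableSet_Iic]
  simp_rw [← hslice]
  exact Measure.prod_apply hs

lemma HasSum.ite_sub_sum {β α : Type*} [AddCommGroup α] [TopologicalSpace α]
    [IsTopologicalAddGroup α] [DecidableEq β] {f : β → α} {a : α} (h : HasSum f a) (B : Finset β) :
    HasSum (fun k => if k ∈ B then 0 else f k) (a - ∑ k ∈ B, f k) := by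
  convert h.sub (hasSum_sum_of_ne_finset_zero (f := fun k => if k ∈ B then f k else 0)
    fun k hk => if_neg hk) using 1
  · ext k; split_ifs <;> simp
  · simp

lemma measurable_of_hasSum {Ω : Type*} [m : MeasurableSpace Ω] {f : ℕ → Ω → ℝ} {g : Ω → ℝ}
    (hf : ∀ k, Measurable (f k)) (h : ∀ ω, HasSum (fun k => f k ω) (g ω)) : Measurable g :=
  measurable_of_tendsto_metrizable (fun _ => Finset.measurable_sum _ fun k _ => hf k)
    (tendsto_pi_nhds.mpr fun ω => (h ω).tendsto_sum_nat)

section LinearProcess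

variable {Ω : Type*} {mΩ : MeasurableSpace Ω} {μ : Measure Ω} {Z : ℤ → Ω → ℝ} {c : ℕ → ℝ}
  {n : ℤ} {V : Ω → ℝ}

lemma measurable_iSup_comap_sub_sum (hV : ∀ ω, HasSum (fun k : ℕ => c k * Z (n - k) ω) (V ω))
    (B : Finset ℕ) :
    Measurable[⨆ i ∈ (fun k : ℕ => n - k) '' (↑B)ᶜ, MeasurableSpace.comap (Z i) inferInstance]
      fun ω => V ω - ∑ k ∈ B, c k * Z (n - k) ω := by
  refine measurable_of_hasSum (m := ⨆ i ∈ (fun k : ℕ => n - k) '' (↑B)ᶜ,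
    MeasurableSpace.comap (Z i) inferInstance) (fun k => ?_) fun ω => (hV ω).ite_sub_sum B
  by_cases hk : k ∈ B
  · simp [hk]
  · simp only [hk, if_false]
    refine measurable_const.mul (Measurable.of_comap_le ?_)
    exact le_biSup (fun i => MeasurableSpace.comap (Z i) inferInstance) ⟨k, hk, rfl⟩

lemma measurable_sub_sum (hZm : ∀ i, Measurable (Z i))
    (hV : ∀ ω, HasSum (fun k : ℕ => c k * Z (n - k) ω) (V ω)) (B : Finset ℕ) :
    Measurable fun ω => V ω - ∑ k ∈ B, c k * Z (n - k) ω :=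
  (measurable_iSup_comap_sub_sum hV B).mono (iSup₂_le fun i _ => (hZm i).comap_le) le_rfl

lemma sub_sum_eq_zero_of_forall_notMem
    (hV : ∀ ω, HasSum (fun k : ℕ => c k * Z (n - k) ω) (V ω)) {B : Finset ℕ}
    (hB : ∀ k ∉ B, c k = 0) (ω : Ω) : V ω - ∑ k ∈ B, c k * Z (n - k) ω = 0 :=
  ((hV ω).ite_sub_sum B).unique (by convert hasSum_zero with k; split_ifs with hk <;> simp [hB, hk])

lemma indep_iSup_comap_of_mem (hZ : iIndepFun Z μ) (hZm : ∀ i, Measurable (Z i))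
    {B : Finset ℕ} {k' : ℕ} (hk' : k' ∈ B) :
    Indep (⨆ i ∈ (fun k : ℕ => n - k) '' (↑B)ᶜ, MeasurableSpace.comap (Z i) inferInstance)
      (MeasurableSpace.comap (Z (n - k')) inferInstance) μ := by
  have hdisj : Disjoint ((fun k : ℕ => n - k) '' (↑B)ᶜ) {n - (k' : ℤ)} := by
    refine disjoint_singleton_right.mpr ?_
    rintro ⟨k, hk, hkk'⟩
    exact hk (by rwa [Nat.cast_injective (sub_right_injective hkk')])
  simpa using indep_iSup_of_disjoint (fun i => (hZm i).comap_le) hZ.iIndep hdisj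

lemma indepFun_sub_sum_of_mem (hZ : iIndepFun Z μ) (hZm : ∀ i, Measurable (Z i))
    (hV : ∀ ω, HasSum (fun k : ℕ => c k * Z (n - k) ω) (V ω)) {B : Finset ℕ} {k' : ℕ}
    (hk' : k' ∈ B) : IndepFun (fun ω => V ω - ∑ k ∈ B, c k * Z (n - k) ω) (Z (n - k')) μ := by
  rw [IndepFun_iff_Indep]
  exact indep_of_indep_of_le_left (indep_iSup_comap_of_mem hZ hZm hk')
    (measurable_iSup_comap_sub_sum hV B).comap_le

lemma indepFun_sub_sum_add_of_mem (hZ : iIndepFun Z μ)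
    (hZm : ∀ i, Measurable (Z i)) {e : Ω → ℝ} (he : Measurable e)
    (hZe : IndepFun (fun ω i => Z i ω) e μ)
    (hV : ∀ ω, HasSum (fun k : ℕ => c k * Z (n - k) ω) (V ω)) {B : Finset ℕ} {k' : ℕ}
    (hk' : k' ∈ B) :
    IndepFun (fun ω => V ω - ∑ k ∈ B, c k * Z (n - k) ω) (fun ω => e ω + Z (n - k') ω) μ := by
  have hZe' : Indep (MeasurableSpace.comap (fun ω i => Z i ω) MeasurableSpace.pi)
      (MeasurableSpace.comap e inferInstance) μ := (IndepFun_iff_Indep _ _ _).mp hZe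
  have := hZ.isProbabilityMeasure
  have hindep := indep_sup_right_of_indep_sup_left (iSup₂_le fun i _ => (hZm i).comap_le)
    (hZm _).comap_le he.comap_le (indep_iSup_comap_of_mem (n := n) hZ hZm hk')
    (indep_of_indep_of_le_left hZe'
      (sup_le (iSup₂_le fun i _ => MeasurableSpace.comap_le_comap_pi (g := Z) i)
        (MeasurableSpace.comap_le_comap_pi (g := Z) _)))
  rw [IndepFun_iff_Indep]
  refine indep_of_indep_of_le hindep (measurable_iSup_comap_sub_sum hV B).comap_le ?_
  exact Measurable.comap_le (.add (Measurable.of_comap_le le_sup_right)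
    (Measurable.of_comap_le le_sup_left))

lemma nullSingletonClass_map_sub_sum (hZ : iIndepFun Z μ) (hZm : ∀ i, Measurable (Z i))
    (hV : ∀ ω, HasSum (fun k : ℕ => c k * Z (n - k) ω) (V ω)) {B : Finset ℕ} {k₀ : ℕ}
    (hk₀ : k₀ ∉ B) (hc : c k₀ ≠ 0) [NullSingletonClass (μ.map (Z (n - k₀)))] :
    NullSingletonClass (μ.map fun ω => V ω - ∑ k ∈ B, c k * Z (n - k) ω) := by
  have := hZ.isProbabilityMeasure
  have hsplit : (fun ω => V ω - ∑ k ∈ B, c k * Z (n - k) ω) = fun ω =>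
      (V ω - ∑ k ∈ insert k₀ B, c k * Z (n - k) ω) + c k₀ * Z (n - k₀) ω := by
    ext ω
    rw [Finset.sum_insert hk₀]
    ring
  rw [hsplit]
  exact IndepFun.nullSingletonClass_map_add_mul
    (indepFun_sub_sum_of_mem hZ hZm hV (B.mem_insert_self k₀)) (measurable_sub_sum hZm hV _)
    (hZm _) hc

end LinearProcess

theorem lem_D_general
    {Ω : Type} [MeasureSpace Ω] [IsProbabilityMeasure (ℙ : Measure Ω)]
    (Z : ℤ → Ω → ℝ) (ε : ℕ → Ω → ℝ)
    (hZmeas : ∀ i, Measurable (Z i)) (hεmeas : ∀ j, Measurable (ε j))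
    (hZindep : iIndepFun Z ℙ)
    (hZident : ∀ i, Measure.map (Z i) ℙ = Measure.map (Z 0) ℙ)
    (fZ : ℝ → ℝ)
    (hfZ : Measure.map (Z 0) ℙ = (volume : Measure ℝ).withDensity fun x => ENNReal.ofReal (fZ x))
    (hZεindep : IndepFun (fun ω i => Z i ω) (fun ω j => ε j ω) ℙ)
    (c : ℕ → ℝ) (hc0 : c 0 = 1)
    (X : ℕ → Ω → ℝ)
    (hX : ∀ (j : ℕ) (ω : Ω), HasSum (fun k : ℕ => c k * Z ((j : ℤ) - (k : ℤ)) ω) (X j ω))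
    (Y : ℕ → Ω → ℝ) (hYdef : ∀ j ω, Y j ω = X j ω + ε j ω)
    (fεZ : ℝ → ℝ)
    (hfεZ : Measure.map (fun ω => ε 1 ω + Z 1 ω) ℙ
      = (volume : Measure ℝ).withDensity fun x => ENNReal.ofReal (fεZ x))
    (hfεZ_smooth : ContDiff ℝ 2 fεZ)
    (hfεZ_bdd : ∃ M, ∀ x, |deriv fεZ x| ≤ M ∧ |iteratedDeriv 2 fεZ x| ≤ M)
    (FεZ FYd : ℝ → ℝ)
    (hFεZ : ∀ x, FεZ x = (ℙ {ω | ε 1 ω + Z 1 ω ≤ x}).toReal)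
    (hFYd : ∀ x, FYd x = (ℙ {ω | Y 1 ω ≤ x}).toReal) :
    ∀ r : ℕ, r ≤ 2 → ∀ y : ℝ,
      iteratedDeriv r FYd y = ∫ ω, iteratedDeriv r FεZ (y - (X 1 ω - Z 1 ω)) ∂ℙ := by
  intro r hr y
  obtain ⟨M, hM⟩ := hfεZ_bdd
  have hV : ∀ ω, HasSum (fun k : ℕ => c k * Z (1 - k) ω) (X 1 ω) := fun ω => by
    simpa using hX 1 ω
  have hW : (fun ω => X 1 ω - Z 1 ω) = fun ω => X 1 ω - ∑ k ∈ {0}, c k * Z (1 - k) ω := by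
    simp [hc0]
  have hWm : Measurable fun ω => X 1 ω - Z 1 ω := hW ▸ measurable_sub_sum hZmeas hV {0}
  have hSm : Measurable fun ω => ε 1 ω + Z 1 ω := (hεmeas 1).add (hZmeas 1)
  have hWS : IndepFun (fun ω => X 1 ω - Z 1 ω) (fun ω => ε 1 ω + Z 1 ω) := by
    simpa [hW] using indepFun_sub_sum_add_of_mem hZindep hZmeas (hεmeas 1)
      (hZεindep.comp measurable_id (measurable_pi_apply 1)) hV (Finset.mem_singleton_self 0)
  have hFεZ' : ∀ x, FεZ x = ((Measure.map (fun ω => ε 1 ω + Z 1 ω) ℙ) (Iic x)).toReal := fun x => by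
    rw [hFεZ, Measure.map_apply hSm measurableSet_Iic]
    rfl
  have hFY : FYd = fun t => ∫ ω, FεZ (t - (X 1 ω - Z 1 ω)) := funext fun t => by
    simp_rw [hFεZ', ← IndepFun.measure_add_le_toReal_eq_integral hWS hWm hSm, hFYd, hYdef,
      sub_add_add_cancel]
  rcases em (∃ k, k ≠ 0 ∧ c k ≠ 0) with ⟨k₀, hk₀, hck₀⟩ | hdeg
  · have : NullSingletonClass (Measure.map (Z (1 - k₀)) ℙ) := by
      rw [hZident, hfZ]
      infer_instance
    have : NullSingletonClass (Measure.map (fun ω => X 1 ω - Z 1 ω) ℙ) :=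
      hW ▸ nullSingletonClass_map_sub_sum hZindep hZmeas hV (by simpa using hk₀) hck₀
    rw [hFY]
    exact iteratedDeriv_integral_comp_sub_cdf hWm hfεZ (hfεZ_smooth.differentiable (by norm_num))
      (fun x => (hM x).1) hFεZ' hr y
  · have hW0 : ∀ ω, X 1 ω - Z 1 ω = 0 := fun ω => by
      rw [congrFun hW ω]
      exact sub_sum_eq_zero_of_forall_notMem hV
        (fun k hk => not_not.mp fun h => hdeg ⟨k, by simpa using hk, h⟩) ω
    simp [hFY, hW0]

theorem lem_D
    {Ω : Type} [MeasureSpace Ω] [IsProbabilityMeasure (ℙ : Measure Ω)]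
    (Z : ℤ → Ω → ℝ) (ε : ℕ → Ω → ℝ)
    (hZmeas : ∀ i, Measurable (Z i)) (hεmeas : ∀ j, Measurable (ε j))
    (hZindep : iIndepFun Z ℙ)
    (hZident : ∀ i, Measure.map (Z i) ℙ = Measure.map (Z 0) ℙ)
    (hZcentered : (∫ ω, Z 0 ω ∂ℙ) = 0)
    (fZ : ℝ → ℝ)
    (hfZ : Measure.map (Z 0) ℙ = (volume : Measure ℝ).withDensity fun x => ENNReal.ofReal (fZ x))
    (hεindep : iIndepFun ε ℙ)
    (hεident : ∀ j, Measure.map (ε j) ℙ = Measure.map (ε 1) ℙ)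
    (fε : ℝ → ℝ)
    (hfε : Measure.map (ε 1) ℙ = (volume : Measure ℝ).withDensity fun x => ENNReal.ofReal (fε x))
    (hZεindep : IndepFun (fun ω i => Z i ω) (fun ω j => ε j ω) ℙ)
    (c : ℕ → ℝ) (hc0 : c 0 = 1)
    (X : ℕ → Ω → ℝ)
    (hX : ∀ (j : ℕ) (ω : Ω), HasSum (fun k : ℕ => c k * Z ((j : ℤ) - (k : ℤ)) ω) (X j ω))
    (Y : ℕ → Ω → ℝ) (hYdef : ∀ j ω, Y j ω = X j ω + ε j ω)
    (f fY fεZ : ℝ → ℝ) (x₀ : ℝ)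
    (hfX : Measure.map (X 1) ℙ = (volume : Measure ℝ).withDensity fun x => ENNReal.ofReal (f x))
    (hfYd : Measure.map (Y 1) ℙ = (volume : Measure ℝ).withDensity fun x => ENNReal.ofReal (fY x))
    (hfεZ : Measure.map (fun ω => ε 1 ω + Z 1 ω) ℙ
      = (volume : Measure ℝ).withDensity fun x => ENNReal.ofReal (fεZ x))
    (hfεZ_smooth : ContDiff ℝ 2 fεZ)
    (hfεZ_bdd : ∃ M, ∀ x, |deriv fεZ x| ≤ M ∧ |iteratedDeriv 2 fεZ x| ≤ M)
    (hL2 : ∀ r : ℕ, r ≤ 2 → Integrable fun v => (iteratedDeriv r fεZ v) ^ 2)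
    (κ : ℝ) (hκ : 0 < κ) (hmom : Integrable fun ω => |Y 1 ω| ^ κ)
    (FεZ FYd : ℝ → ℝ)
    (hFεZ : ∀ x, FεZ x = (ℙ {ω | ε 1 ω + Z 1 ω ≤ x}).toReal)
    (hFYd : ∀ x, FYd x = (ℙ {ω | Y 1 ω ≤ x}).toReal) :
    ∀ r : ℕ, r ≤ 2 → ∀ y : ℝ,
      iteratedDeriv r FYd y = ∫ ω, iteratedDeriv r FεZ (y - (X 1 ω - Z 1 ω)) ∂ℙ :=
  lem_D_general Z ε hZmeas hεmeas hZindep hZident fZ hfZ hZεindep c hc0 X hX Y hYdef fεZ hfεZ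
    hfεZ_smooth hfεZ_bdd FεZ FYd hFεZ hFYd
end
end

section
/- (Lemma E.) Let k ≥ 1 be an integer and r ≥ 0. Let ε and Z be independent real random variables such that Z has a density f_Z that is r times continuously differentiable with bounded derivatives and ∫ |f_Z^{(r)}(v)|^k dv < ∞. Then ε + Z has a density f_{ε+Z} that is r times differentiable with f_{ε+Z}^{(r)}(v) = E[f_Z^{(r)}(v − ε)], and ∫ |f_{ε+Z}^{(r)}(v)|^k dv < ∞. -/
open MeasureTheory ProbabilityTheory Filter Asymptotics
open scoped Real Topology NNReal ProbabilityTheory ENNReal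

noncomputable section

/-!
The law of `ε + Z` is the convolution of the law of `ε` with `f_Z(v) dv`, which has density
`v ↦ E[f_Z(v - ε)]` by translation invariance of Lebesgue measure and Tonelli. Bounded derivatives give the
domination needed to differentiate under the expectation `r` times. For the `Lᵏ` bound, Jensen
gives `|E[g(v - ε)]|ᵏ ≤ E[|g(v - ε)|ᵏ]`, and integrating in `v` and swapping the integrals leaves
`∫ |g|ᵏ` by translation invariance again.
-/

theorem conv_withDensity_eq_withDensity_lintegral {G : Type*} [AddCommGroup G]
    [MeasurableSpace G] [MeasurableAdd₂ G] [MeasurableNeg G] (μ ν : Measure G) [SFinite μ]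
    [SFinite ν] [ν.IsAddLeftInvariant] {g : G → ℝ≥0∞} (hg : Measurable g) :
    μ ∗ ν.withDensity g = ν.withDensity fun v => ∫⁻ x, g (v - x) ∂μ := by
  have hg' : Measurable fun p : G × G => g (p.1 - p.2) := hg.comp (by fun_prop)
  refine Measure.ext_of_lintegral _ fun f hf => ?_
  rw [Measure.lintegral_conv hf,
    lintegral_withDensity_eq_lintegral_mul _ hg'.lintegral_prod_right' hf]
  calc ∫⁻ x, ∫⁻ y, f (x + y) ∂ν.withDensity g ∂μ
      = ∫⁻ x, ∫⁻ v, g (v - x) * f v ∂ν ∂μ := by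
        refine lintegral_congr fun x => ?_
        rw [lintegral_withDensity_eq_lintegral_mul _ hg (g := fun y => f (x + y))
            (hf.comp (measurable_const_add x)),
          ← lintegral_add_left_eq_self (fun v => g (v - x) * f v) x]
        simp only [Pi.mul_apply, add_sub_cancel_left]
    _ = ∫⁻ v, (∫⁻ x, g (v - x) ∂μ) * f v ∂ν := by
        rw [lintegral_lintegral_swap
          ((hg'.comp measurable_swap).mul (hf.comp measurable_snd)).aemeasurable]
        exact lintegral_congr fun v =>
          lintegral_mul_const _ (hg.comp (measurable_const.sub measurable_id))

section

variable {Ω : Type*} {mΩ : MeasurableSpace Ω} {μ : Measure Ω}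

theorem ProbabilityTheory.IndepFun.map_add_eq_withDensity_lintegral {G : Type*} [AddCommGroup G]
    [MeasurableSpace G] [MeasurableAdd₂ G] [MeasurableNeg G] {ν : Measure G} [SFinite ν]
    [ν.IsAddLeftInvariant] [IsFiniteMeasure μ] {X Y : Ω → G} (hX : Measurable X)
    (hY : Measurable Y) (hXY : IndepFun X Y μ) {g : G → ℝ≥0∞} (hg : Measurable g)
    (hY_law : μ.map Y = ν.withDensity g) :
    μ.map (fun ω => X ω + Y ω) = ν.withDensity fun v => ∫⁻ ω, g (v - X ω) ∂μ := by
  rw [show (fun ω => X ω + Y ω) = X + Y from rfl, hXY.map_add_eq_map_conv_map hX hY, hY_law,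
    conv_withDensity_eq_withDensity_lintegral _ _ hg]
  congr 1 with v
  exact lintegral_map (hg.comp (measurable_const.sub measurable_id)) hX

theorem pow_lintegral_le_lintegral_pow [IsProbabilityMeasure μ] {f : Ω → ℝ≥0∞}
    (hf : AEMeasurable f μ) (k : ℕ) : (∫⁻ ω, f ω ∂μ) ^ k ≤ ∫⁻ ω, f ω ^ k ∂μ := by
  rcases Nat.eq_zero_or_pos k with rfl | hk
  · simp
  have hk' : (0 : ℝ) < k := by exact_mod_cast hk
  have h := eLpNorm'_le_eLpNorm'_of_exponent_le one_pos (Nat.one_le_cast.mpr hk) μ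
    hf.aestronglyMeasurable
  simp only [eLpNorm'_eq_lintegral_enorm, enorm_eq_self, ENNReal.rpow_one, div_one] at h
  calc (∫⁻ ω, f ω ∂μ) ^ k = (∫⁻ ω, f ω ∂μ) ^ (k : ℝ) := (ENNReal.rpow_natCast _ k).symm
    _ ≤ ((∫⁻ ω, f ω ^ (k : ℝ) ∂μ) ^ (1 / (k : ℝ))) ^ (k : ℝ) := ENNReal.rpow_le_rpow h hk'.le
    _ = ∫⁻ ω, f ω ^ k ∂μ := by
      rw [← ENNReal.rpow_mul, one_div_mul_cancel hk'.ne', ENNReal.rpow_one]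
      simp only [ENNReal.rpow_natCast]

variable {ε : Ω → ℝ}

theorem integrable_comp_sub_of_abs_le [IsFiniteMeasure μ] (hε : Measurable ε) {g : ℝ → ℝ}
    (hg : Measurable g) {C : ℝ} (hgC : ∀ x, |g x| ≤ C) (v : ℝ) :
    Integrable (fun ω => g (v - ε ω)) μ :=
  .of_bound (hg.comp (measurable_const.sub hε)).aestronglyMeasurable C
    (ae_of_all _ fun ω => hgC (v - ε ω))

theorem hasDerivAt_integral_comp_sub_s17 [IsFiniteMeasure μ] (hε : Measurable ε)
    {g : ℝ → ℝ} (hg : Differentiable ℝ g) {C C' : ℝ} (hgC : ∀ x, |g x| ≤ C)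
    (hg'C : ∀ x, |deriv g x| ≤ C') (v : ℝ) :
    HasDerivAt (fun w => ∫ ω, g (w - ε ω) ∂μ) (∫ ω, deriv g (v - ε ω) ∂μ) v :=
  (hasDerivAt_integral_of_dominated_loc_of_deriv_le (bound := fun _ => C') univ_mem
    (.of_forall fun w => (integrable_comp_sub_of_abs_le hε hg.continuous.measurable hgC w).1)
    (integrable_comp_sub_of_abs_le hε hg.continuous.measurable hgC v)
    ((measurable_deriv g).comp (measurable_const.sub hε)).aestronglyMeasurable
    (ae_of_all _ fun ω w _ => hg'C (w - ε ω)) (integrable_const C')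
    (ae_of_all _ fun _ w _ =>
      ((hg _).hasDerivAt.comp w ((hasDerivAt_id w).sub_const _)).congr_deriv (mul_one _))).2

theorem iteratedDeriv_integral_comp_sub [IsFiniteMeasure μ] (hε : Measurable ε)
    {f : ℝ → ℝ} {r : ℕ} (hf : ContDiff ℝ r f)
    (hbdd : ∀ j ≤ r, ∃ C, ∀ x, |iteratedDeriv j f x| ≤ C) {j : ℕ} (hj : j ≤ r) :
    iteratedDeriv j (fun w => ∫ ω, f (w - ε ω) ∂μ)
      = fun v => ∫ ω, iteratedDeriv j f (v - ε ω) ∂μ := by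
  induction j with
  | zero => simp
  | succ j ih =>
    obtain ⟨C, hC⟩ := hbdd j (by omega)
    obtain ⟨C', hC'⟩ := hbdd (j + 1) hj
    simp only [iteratedDeriv_succ] at hC' ⊢
    rw [ih (by omega)]
    ext v
    exact (hasDerivAt_integral_comp_sub_s17 (μ := μ) hε
      (hf.differentiable_iteratedDeriv j (by exact_mod_cast hj)) hC hC' v).deriv

theorem lintegral_enorm_integral_comp_sub_pow_le [IsProbabilityMeasure μ] (hε : Measurable ε)
    {g : ℝ → ℝ} (hg : Measurable g) (k : ℕ) :
    ∫⁻ v, ‖∫ ω, g (v - ε ω) ∂μ‖ₑ ^ k ≤ ∫⁻ v, ‖g v‖ₑ ^ k := by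
  have hmeas : Measurable fun p : ℝ × Ω => ‖g (p.1 - ε p.2)‖ₑ ^ k :=
    ((hg.comp (measurable_fst.sub (hε.comp measurable_snd))).enorm).pow_const k
  calc ∫⁻ v, ‖∫ ω, g (v - ε ω) ∂μ‖ₑ ^ k
      ≤ ∫⁻ v, ∫⁻ ω, ‖g (v - ε ω)‖ₑ ^ k ∂μ := lintegral_mono fun v =>
        (pow_le_pow_left' (enorm_integral_le_lintegral_enorm _) k).trans
          (pow_lintegral_le_lintegral_pow (hg.comp (measurable_const.sub hε)).enorm.aemeasurable k)
    _ = ∫⁻ ω, ∫⁻ v, ‖g (v - ε ω)‖ₑ ^ k ∂volume ∂μ := lintegral_lintegral_swap hmeas.aemeasurable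
    _ = ∫⁻ v, ‖g v‖ₑ ^ k := by
        simp only [lintegral_sub_right_eq_self (fun v => ‖g v‖ₑ ^ k), lintegral_const,
          measure_univ, mul_one]

theorem integrable_abs_integral_comp_sub_pow [IsProbabilityMeasure μ] (hε : Measurable ε)
    {g : ℝ → ℝ} (hg : Measurable g) {k : ℕ} (hgk : Integrable fun v => |g v| ^ k) :
    Integrable fun v => |∫ ω, g (v - ε ω) ∂μ| ^ k := by
  have hG : Measurable fun v => ∫ ω, g (v - ε ω) ∂μ :=
    (StronglyMeasurable.integral_prod_right (f := fun v ω => g (v - ε ω))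
      (hg.comp (measurable_fst.sub (hε.comp measurable_snd))).stronglyMeasurable).measurable
  refine ⟨(hG.abs.pow_const k).aestronglyMeasurable, ?_⟩
  have hgk' := hgk.2
  simp only [HasFiniteIntegral, enorm_pow, Real.enorm_abs] at hgk' ⊢
  exact (lintegral_enorm_integral_comp_sub_pow_le hε hg k).trans_lt hgk'

end

theorem lem_E_general
    {Ω : Type} [MeasureSpace Ω] [IsProbabilityMeasure (ℙ : Measure Ω)]
    (ε Z : Ω → ℝ) (hεmeas : Measurable ε) (hZmeas : Measurable Z)
    (hindep : IndepFun ε Z ℙ)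
    (fZ : ℝ → ℝ) (hfZnn : ∀ x, 0 ≤ fZ x)
    (hfZ : Measure.map Z ℙ = (volume : Measure ℝ).withDensity fun x => ENNReal.ofReal (fZ x))
    (k r : ℕ)
    (hsmooth : ContDiff ℝ r fZ)
    (hbdd : ∀ j : ℕ, j ≤ r → ∃ M, ∀ x, |iteratedDeriv j fZ x| ≤ M)
    (hLk : Integrable fun v : ℝ => |iteratedDeriv r fZ v| ^ k) :
    (Measure.map (fun ω => ε ω + Z ω) ℙ
      = (volume : Measure ℝ).withDensity fun v => ENNReal.ofReal (∫ ω, fZ (v - ε ω) ∂ℙ))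
    ∧ (∀ v : ℝ, iteratedDeriv r (fun w => ∫ ω, fZ (w - ε ω) ∂ℙ) v
        = ∫ ω, iteratedDeriv r fZ (v - ε ω) ∂ℙ)
    ∧ Integrable fun v : ℝ => |∫ ω, iteratedDeriv r fZ (v - ε ω) ∂ℙ| ^ k := by
  have hfZmeas : Measurable fZ := hsmooth.continuous.measurable
  obtain ⟨C, hC⟩ : ∃ C, ∀ x, |fZ x| ≤ C := by simpa using hbdd 0 r.zero_le
  refine ⟨?_, congrFun (iteratedDeriv_integral_comp_sub hεmeas hsmooth hbdd le_rfl),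
    integrable_abs_integral_comp_sub_pow hεmeas
      (hsmooth.continuous_iteratedDeriv r le_rfl).measurable hLk⟩
  rw [hindep.map_add_eq_withDensity_lintegral hεmeas hZmeas hfZmeas.ennreal_ofReal hfZ]
  congr 1 with v
  exact (ofReal_integral_eq_lintegral_ofReal (integrable_comp_sub_of_abs_le hεmeas hfZmeas hC v)
    (ae_of_all _ fun _ => hfZnn _)).symm

theorem lem_E
    {Ω : Type} [MeasureSpace Ω] [IsProbabilityMeasure (ℙ : Measure Ω)]
    (ε Z : Ω → ℝ) (hεmeas : Measurable ε) (hZmeas : Measurable Z)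
    (hindep : IndepFun ε Z ℙ)
    (fZ : ℝ → ℝ) (hfZmeas : Measurable fZ) (hfZnn : ∀ x, 0 ≤ fZ x)
    (hfZ : Measure.map Z ℙ = (volume : Measure ℝ).withDensity fun x => ENNReal.ofReal (fZ x))
    (k r : ℕ) (hk : 1 ≤ k)
    (hsmooth : ContDiff ℝ r fZ)
    (hbdd : ∀ j : ℕ, j ≤ r → ∃ M, ∀ x, |iteratedDeriv j fZ x| ≤ M)
    (hLk : Integrable fun v : ℝ => |iteratedDeriv r fZ v| ^ k) :
    (Measure.map (fun ω => ε ω + Z ω) ℙ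
      = (volume : Measure ℝ).withDensity fun v => ENNReal.ofReal (∫ ω, fZ (v - ε ω) ∂ℙ))
    ∧ (∀ v : ℝ, iteratedDeriv r (fun w => ∫ ω, fZ (w - ε ω) ∂ℙ) v
        = ∫ ω, iteratedDeriv r fZ (v - ε ω) ∂ℙ)
    ∧ Integrable fun v : ℝ => |∫ ω, iteratedDeriv r fZ (v - ε ω) ∂ℙ| ^ k :=
  lem_E_general ε Z hεmeas hZmeas hindep fZ hfZnn hfZ k r hsmooth hbdd hLk
end
end
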